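/- arXiv:1311.0363 — 2 statements merged into one kernel-verified Lean document; each statement's English description precedes it below -/
import Mathlib

section
/- If u ▷_{βΩ}* v, then there exists a term w such that u ▷* w and w ▷_Ω* v (Ω-reduction steps can be postponed after β-reduction steps). -/
/-! ## A de Bruijn presentation of the untyped λ-calculus -/

/-- Untyped λ-terms in de Bruijn representation. -/
inductive Lam : Type where
  | var : ℕ → Lam
  | app : Lam → Lam → Lam
  | abs : Lam → Lam
  deriving DecidableEq

namespace Lam

/-- Lifting of de Bruijn indices (cutoff `d`). -/
def lift (d : ℕ) : Lam → Lam
  | var n => if n < d then var n else var (n + 1)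
  | app a b => app (lift d a) (lift d b)
  | abs a => abs (lift (d + 1) a)

/-- Capture-avoiding substitution of `u` for the free variable `k`. -/
def subst : Lam → ℕ → Lam → Lam
  | var n, k, u => if n = k then u else if k < n then var (n - 1) else var n
  | app a b, k, u => app (subst a k u) (subst b k u)
  | abs a, k, u => abs (subst a (k + 1) (lift 0 u))

/-- One-step β-reduction `▷`. -/
inductive Step : Lam → Lam → Prop
  | beta (a b : Lam) : Step (app (abs a) b) (subst a 0 b)
  | appL {a a' : Lam} (b : Lam) : Step a a' → Step (app a b) (app a' b)
  | appR (a : Lam) {b b' : Lam} : Step b b' → Step (app a b) (app a b')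
  | abs {a a' : Lam} : Step a a' → Step (Lam.abs a) (Lam.abs a')

/-- β-reduction `▷*` : reflexive and transitive closure of `▷`. -/
def Steps : Lam → Lam → Prop := Relation.ReflTransGen Step

/-- β-normal term. -/
def Normal (t : Lam) : Prop := ∀ t', ¬ Step t t'

/-- `Free x t` : the variable `x` (de Bruijn index, seen from the root) occurs free in `t`. -/
def Free : ℕ → Lam → Prop
  | x, var n => x = n
  | x, app a b => Free x a ∨ Free x b
  | x, abs a => Free (x + 1) a

/-- Closed term. -/
def Closed (t : Lam) : Prop := ∀ x, ¬ Free x t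

/-- A variable applied to a (possibly empty) list of arguments. -/
inductive HeadVarApp : Lam → Prop
  | var (n : ℕ) : HeadVarApp (var n)
  | app {a : Lam} (b : Lam) : HeadVarApp a → HeadVarApp (app a b)

/-- Head normal forms `λx₁…λxₙ.(y t₁ … tₘ)`. -/
inductive IsHNF : Lam → Prop
  | head {t : Lam} : HeadVarApp t → IsHNF t
  | abs {a : Lam} : IsHNF a → IsHNF (Lam.abs a)

/-- A term is solvable if it β-reduces to a head normal form. -/
def Solvable (t : Lam) : Prop := ∃ h, Steps t h ∧ IsHNF h

/-- `Ω = (λx.(x x))(λx.(x x))`. -/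
def Omega : Lam := app (abs (app (var 0) (var 0))) (abs (app (var 0) (var 0)))

/-- Ω-reduction `▷_Ω` : replace an unsolvable subterm by `Ω`. -/
inductive OmegaStep : Lam → Lam → Prop
  | unsolv {t : Lam} : ¬ Solvable t → OmegaStep t Omega
  | appL {a a' : Lam} (b : Lam) : OmegaStep a a' → OmegaStep (app a b) (app a' b)
  | appR (a : Lam) {b b' : Lam} : OmegaStep b b' → OmegaStep (app a b) (app a b')
  | abs {a a' : Lam} : OmegaStep a a' → OmegaStep (Lam.abs a) (Lam.abs a')

/-- `▷_Ω*`. -/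
def OmegaSteps : Lam → Lam → Prop := Relation.ReflTransGen OmegaStep

/-- `▷_{βΩ}` : union of `▷` and `▷_Ω`. -/
def BOStep (t t' : Lam) : Prop := Step t t' ∨ OmegaStep t t'

/-- `▷_{βΩ}*`. -/
def BOSteps : Lam → Lam → Prop := Relation.ReflTransGen BOStep

/-- `u ≃ v` : equality in the λ-theory H (common `▷_{βΩ}*`-reduct). -/
def SimH (u v : Lam) : Prop := ∃ w, BOSteps u w ∧ BOSteps v w

/-- Simultaneous (parallel) substitution along `σ`. -/
def psubst (σ : ℕ → Lam) : Lam → Lam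
  | var n => σ n
  | app a b => app (psubst σ a) (psubst σ b)
  | abs a => abs (psubst (fun n => match n with | 0 => var 0 | m + 1 => lift 0 (σ m)) a)

/-- `(x V)` : the application of a head `h` to a list of arguments. -/
def mkApps (h : Lam) (as : List Lam) : Lam := as.foldl app h

/-- `U ⊑ V` : some initial segment of `V` is obtained from `U` by a substitution
followed by componentwise β-reductions. -/
def Sqsubseteq (U V : List Lam) : Prop :=
  ∃ (σ : ℕ → Lam) (W : List Lam), W <+: V ∧
    List.Forall₂ (fun u w => Steps (psubst σ u) w) U W

/-! ### Occurrences as positions -/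

/-- Directions inside a term. -/
inductive Dir : Type where
  | left | right | down
  deriving DecidableEq

/-- Positions (occurrences) in a term. -/
abbrev Pos := List Dir

/-- The subterm of `t` at position `p` (if any). -/
def subtermAt : Lam → Pos → Option Lam
  | t, [] => some t
  | app a _, Dir.left :: p => subtermAt a p
  | app _ b, Dir.right :: p => subtermAt b p
  | abs a, Dir.down :: p => subtermAt a p
  | _, _ :: _ => none

/-- Replace the subterm of `t` at position `p` by `s` (if the position exists). -/
def replaceAt : Lam → Pos → Lam → Option Lam
  | _, [], s => some s
  | app a b, Dir.left :: p, s => (replaceAt a p s).map (fun a' => app a' b)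
  | app a b, Dir.right :: p, s => (replaceAt b p s).map (fun b' => app a b')
  | abs a, Dir.down :: p, s => (replaceAt a p s).map Lam.abs
  | _, _ :: _, _ => none

/-- `OccOf x t p` : position `p` is an occurrence in `t` of the free variable `x`
(index seen from the root, hence shifted by the number of binders crossed). -/
def OccOf (x : ℕ) (t : Lam) (p : Pos) : Prop :=
  subtermAt t p = some (var (x + p.count Dir.down))

/-- `ArgOf t p V` : `V` is the maximal list of arguments, in `t`, of the occurrence
sitting at position `p`; i.e. `([] V)` is the applicative context of that occurrence. -/
def ArgOf (t : Lam) (p : Pos) (V : List Lam) : Prop :=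
  ∃ (q : Pos) (h : Lam),
    p = q ++ List.replicate V.length Dir.left ∧
    (∀ q' : Pos, q ≠ q' ++ [Dir.left]) ∧
    subtermAt t q = some (mkApps h V) ∧ subtermAt t p = some h

/-- `InArgOfOcc x t p q` : `q` is an occurrence of `x` in `t` and the position `p` lies
inside one of the elements of `Arg(x_[q], t)`. -/
def InArgOfOcc (x : ℕ) (t : Lam) (p q : Pos) : Prop :=
  OccOf x t q ∧ ∃ (r : Pos) (n : ℕ),
    q = r ++ List.replicate n Dir.left ∧
    (∀ r' : Pos, r ≠ r' ++ [Dir.left]) ∧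
    ∃ (j : ℕ) (s : Pos), j < n ∧ p = r ++ List.replicate j Dir.left ++ Dir.right :: s

/-- The occurrence `p` of `x` is pure in `t` : no other occurrence `q` of `x` in `t`
is such that `p` occurs in one of the elements of `Arg(x_[q], t)`. -/
def PureOcc (x : ℕ) (t : Lam) (p : Pos) : Prop :=
  OccOf x t p ∧ ∀ q, q ≠ p → ¬ InArgOfOcc x t p q

/-- Renaming of the free variable `y` into `x`. -/
def rename (y x : ℕ) : Lam → Lam
  | var n => if n = y then var x else var n
  | app a b => app (rename y x a) (rename y x b)
  | abs a => abs (rename (y + 1) (x + 1) a)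

/-- `Residue x u v p p'` : along some β-reduction from `u` to `v`, the occurrence `p'` of
`x` in `v` is a residue (traced copy) of the occurrence `p` of `x` in `u`.  This is
expressed by marking the occurrence `p` of `x` with a fresh variable `y` and tracing the
occurrences of `y`. -/
def Residue (x : ℕ) (u v : Lam) (p p' : Pos) : Prop :=
  ∃ (y : ℕ) (u₀ v₀ : Lam),
    ¬ Free y u ∧
    replaceAt u p (var (y + p.count Dir.down)) = some u₀ ∧
    Steps u₀ v₀ ∧ rename y x v₀ = v ∧ OccOf y v₀ p'

/-- The occurrence `p` of the free variable `0` ("x") in `G` is good with respect to the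
closed term `A` : it is pure in `G` and `u[x:=A]` is solvable for every subterm `u` of
`G` in which this occurrence occurs. -/
def GoodOcc (A G : Lam) (p : Pos) : Prop :=
  PureOcc 0 G p ∧
    ∀ (q : Pos) (u : Lam), q <+: p → subtermAt G q = some u →
      Solvable (subst u (q.count Dir.down) A)

/-! ### Miscellaneous -/

/-- A fixed effective Gödel numbering of λ-terms. -/
def code : Lam → ℕ
  | var n => Nat.pair 0 n
  | app a b => Nat.pair 1 (Nat.pair (code a) (code b))
  | abs a => Nat.pair 2 (code a)

/-- Body `f^k z` of the Church numeral. -/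
def churchBody : ℕ → Lam
  | 0 => var 0
  | k + 1 => app (var 1) (churchBody k)

/-- The Church numeral `c_k = λf λz.(f^k z)`. -/
def church (k : ℕ) : Lam := abs (abs (churchBody k))

/-- `n`-fold abstraction `λx₁…λxₙ.t`. -/
def absN : ℕ → Lam → Lam
  | 0, t => t
  | n + 1, t => abs (absN n t)

/-- Number of symbols of a term. -/
def size : Lam → ℕ
  | var _ => 1
  | app a b => size a + size b + 1
  | abs a => size a + 1

/-- Subterm relation. -/
inductive Subterm : Lam → Lam → Prop
  | refl (t : Lam) : Subterm t t
  | appL {s a : Lam} (b : Lam) : Subterm s a → Subterm s (app a b)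
  | appR (a : Lam) {s b : Lam} : Subterm s b → Subterm s (app a b)
  | abs {s a : Lam} : Subterm s a → Subterm s (Lam.abs a)

/-- `t` contains no subterm of the form `(x u)` for the free variable `x`. -/
def NoVarApp : ℕ → Lam → Prop
  | _, var _ => True
  | x, app a b => a ≠ var x ∧ NoVarApp x a ∧ NoVarApp x b
  | x, abs a => NoVarApp (x + 1) a

/-- Headed by the variable `d` : term of the form `(x V)` with `x = var d`. -/
inductive Headed : ℕ → Lam → Prop
  | var (d : ℕ) : Headed d (var d)
  | app {d : ℕ} {a : Lam} (b : Lam) : Headed d a → Headed d (app a b)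

end Lam

/-!
An Ω-step followed by a β-step can be replaced by at most one β-step followed by Ω-steps,
and this local swap postpones all Ω-steps by an abstract commutation argument. The swap
needs unsolvability to be stable under substitution and lifting. By standardization a
solvable term has terminating head reduction; head reduction is deterministic and commutes
with substitution and lifting, so termination of the head reduction of `t[k:=u]` forces
that of `t`.
-/

open Function Relation

namespace Relation

variable {α β : Type*} {r : α → α → Prop}

theorem ReflGen.lift {p : β → β → Prop} (f : α → β) (h : r ≤ (p on f)) :
    ReflGen r ≤ (ReflGen p on f)
  | _, _, .refl => .refl
  | a, b, .single hab => .single (h a b hab)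

variable {s : α → α → Prop}

theorem ReflTransGen.postpone_single
    (h : ∀ a b c, s a b → r b c → ∃ d, ReflGen r a d ∧ ReflTransGen s d c)
    {a b c : α} (hab : ReflTransGen s a b) (hbc : r b c) :
    ∃ d, ReflGen r a d ∧ ReflTransGen s d c := by
  induction hab using ReflTransGen.head_induction_on with
  | refl => exact ⟨c, .single hbc, .refl⟩
  | head hs _ ih =>
    obtain ⟨w, hw | hw, hwc⟩ := ih
    · exact ⟨_, .refl, .head hs hwc⟩
    · obtain ⟨d, hd, hdw⟩ := h _ _ _ hs hw
      exact ⟨d, hd, hdw.trans hwc⟩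

theorem ReflTransGen.postpone
    (h : ∀ a b c, s a b → r b c → ∃ d, ReflGen r a d ∧ ReflTransGen s d c)
    {a b : α} (hab : ReflTransGen (fun x y => r x y ∨ s x y) a b) :
    ∃ c, ReflTransGen r a c ∧ ReflTransGen s c b := by
  induction hab with
  | refl => exact ⟨a, .refl, .refl⟩
  | tail _ hbc ih =>
    obtain ⟨w, haw, hwb⟩ := ih
    rcases hbc with hr | hs
    · obtain ⟨d, hwd, hdc⟩ := hwb.postpone_single h hr
      exact ⟨d, haw.trans hwd.to_reflTransGen, hdc⟩
    · exact ⟨w, haw, hwb.tail hs⟩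

end Relation

namespace Lam

theorem lift_lift (t : Lam) {i j : ℕ} (h : i ≤ j) :
    lift i (lift j t) = lift (j + 1) (lift i t) := by
  induction t generalizing i j with
  | var n => simp only [lift]; split_ifs <;> simp only [lift] <;> split_ifs <;> first | rfl | omega
  | app a b iha ihb => simp only [lift, iha h, ihb h]
  | abs a ih => simp only [lift, ih (Nat.succ_le_succ h)]

@[simp]
theorem subst_lift (t : Lam) (i : ℕ) (u : Lam) : subst (lift i t) i u = t := by
  induction t generalizing i u with
  | var n => simp only [lift]; split_ifs <;> simp only [subst] <;> split_ifs <;> first | rfl | omega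
  | app a b iha ihb => simp only [lift, subst, iha, ihb]
  | abs a ih => simp only [lift, subst, ih]

theorem lift_subst_of_le (t : Lam) {d k : ℕ} (u : Lam) (h : d ≤ k) :
    lift d (subst t k u) = subst (lift d t) (k + 1) (lift d u) := by
  induction t generalizing d k u with
  | var n =>
    simp only [subst, lift]
    split_ifs <;> simp only [subst, lift] <;> split_ifs <;> first | rfl | omega | (congr 1; omega)
  | app a b iha ihb => simp only [subst, lift, iha u h, ihb u h]
  | abs a ih =>
    simp only [subst, lift, ih (lift 0 u) (Nat.succ_le_succ h), lift_lift u (Nat.zero_le d)]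

theorem lift_subst_of_ge (t : Lam) {d k : ℕ} (u : Lam) (h : k ≤ d) :
    lift d (subst t k u) = subst (lift (d + 1) t) k (lift d u) := by
  induction t generalizing d k u with
  | var n =>
    simp only [subst, lift]
    split_ifs <;> simp only [subst, lift] <;> split_ifs <;> first | rfl | omega | (congr 1; omega)
  | app a b iha ihb => simp only [subst, lift, iha u h, ihb u h]
  | abs a ih =>
    simp only [subst, lift, ih (lift 0 u) (Nat.succ_le_succ h), lift_lift u (Nat.zero_le d)]

theorem subst_subst (t : Lam) {i k : ℕ} (v u : Lam) (h : i ≤ k) :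
    subst (subst t i v) k u = subst (subst t (k + 1) (lift i u)) i (subst v k u) := by
  induction t generalizing i k v u with
  | var n =>
    simp only [subst]
    split_ifs <;> simp only [subst, subst_lift] <;> (try split_ifs) <;> first | rfl | omega
  | app a b iha ihb => simp only [subst, iha v u h, ihb v u h]
  | abs a ih =>
    simp only [subst, ih (lift 0 v) (lift 0 u) (Nat.succ_le_succ h),
      lift_lift u (Nat.zero_le i), lift_subst_of_le v u (Nat.zero_le k)]

inductive WHStep : Lam → Lam → Prop
  | beta (a b : Lam) : WHStep (app (abs a) b) (subst a 0 b)
  | app {a a' : Lam} (b : Lam) : WHStep a a' → WHStep (app a b) (app a' b)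

/-- Kashima's standard reduction. -/
inductive St : Lam → Lam → Prop
  | var {t : Lam} {n : ℕ} : ReflTransGen WHStep t (var n) → St t (var n)
  | app {t a b a' b' : Lam} :
      ReflTransGen WHStep t (app a b) → St a a' → St b b' → St t (app a' b')
  | abs {t a a' : Lam} : ReflTransGen WHStep t (abs a) → St a a' → St t (abs a')

theorem WHStep.subst {t t' : Lam} (h : WHStep t t') (k : ℕ) (u : Lam) :
    WHStep (t.subst k u) (t'.subst k u) := by
  induction h with
  | beta a b =>
    rw [subst_subst a b u (Nat.zero_le k)]
    exact .beta _ _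
  | app b _ ih => exact .app _ ih

theorem WHStep.lift {t t' : Lam} (h : WHStep t t') (d : ℕ) :
    WHStep (t.lift d) (t'.lift d) := by
  induction h with
  | beta a b =>
    rw [lift_subst_of_ge a b (Nat.zero_le d)]
    exact .beta _ _
  | app b _ ih => exact .app _ ih

theorem whSteps_subst {t t' : Lam} (h : ReflTransGen WHStep t t') (k : ℕ) (u : Lam) :
    ReflTransGen WHStep (t.subst k u) (t'.subst k u) :=
  h.lift _ fun _ _ hs => hs.subst k u

theorem whSteps_lift {t t' : Lam} (h : ReflTransGen WHStep t t') (d : ℕ) :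
    ReflTransGen WHStep (t.lift d) (t'.lift d) :=
  h.lift _ fun _ _ hs => hs.lift d

theorem whSteps_app {a a' : Lam} (b : Lam) (h : ReflTransGen WHStep a a') :
    ReflTransGen WHStep (app a b) (app a' b) :=
  h.lift (app · b) fun _ _ => WHStep.app b

namespace St

protected theorem refl (t : Lam) : St t t := by
  induction t with
  | var n => exact var .refl
  | app a b iha ihb => exact app .refl iha ihb
  | abs a ih => exact abs .refl ih

theorem of_whSteps {t u v : Lam} (h : ReflTransGen WHStep t u) (huv : St u v) : St t v := by
  cases huv with
  | var hw => exact var (h.trans hw)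
  | app hw ha hb => exact app (h.trans hw) ha hb
  | abs hw ha => exact abs (h.trans hw) ha

protected theorem lift {t t' : Lam} (h : St t t') (d : ℕ) : St (t.lift d) (t'.lift d) := by
  induction h generalizing d with
  | var hw =>
    have hw' := whSteps_lift hw d
    simp only [Lam.lift] at hw' ⊢
    split_ifs at hw' ⊢ <;> exact var hw'
  | app hw _ _ iha ihb => exact app (whSteps_lift hw d) (iha d) (ihb d)
  | abs hw _ ih => exact abs (whSteps_lift hw d) (ih (d + 1))

protected theorem subst {t t' u u' : Lam} (h : St t t') (k : ℕ) (hu : St u u') :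
    St (t.subst k u) (t'.subst k u') := by
  induction h generalizing k u u' with
  | var hw =>
    have hw' := whSteps_subst hw k u
    simp only [Lam.subst] at hw' ⊢
    split_ifs at hw' ⊢
    · exact of_whSteps hw' hu
    all_goals exact var hw'
  | app hw _ _ iha ihb => exact app (whSteps_subst hw k u) (iha k hu) (ihb k hu)
  | abs hw _ ih => exact abs (whSteps_subst hw k u) (ih (k + 1) (hu.lift 0))

theorem tail {t u v : Lam} (htu : St t u) (huv : Step u v) : St t v := by
  induction huv generalizing t with
  | beta a b =>
    obtain _ | ⟨hw, _ | _ | ⟨hw', hab⟩, hb⟩ := htu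
    exact of_whSteps ((hw.trans (whSteps_app _ hw')).tail (.beta _ _)) (hab.subst 0 hb)
  | appL b _ ih =>
    obtain _ | ⟨hw, ha, hb⟩ := htu
    exact app hw (ih ha) hb
  | appR a _ ih =>
    obtain _ | ⟨hw, ha, hb⟩ := htu
    exact app hw ha (ih hb)
  | abs _ ih =>
    obtain _ | _ | ⟨hw, ha⟩ := htu
    exact abs hw (ih ha)

end St

theorem st_of_steps {t u : Lam} (h : Steps t u) : St t u := by
  induction h with
  | refl => exact .refl t
  | tail _ hs ih => exact ih.tail hs

/-- Head reduction. Restricting `app` to an application in function position keeps it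
deterministic. -/
inductive HStep : Lam → Lam → Prop
  | beta (a b : Lam) : HStep (app (abs a) b) (subst a 0 b)
  | app {a₁ a₂ a' : Lam} (b : Lam) :
      HStep (app a₁ a₂) a' → HStep (app (app a₁ a₂) b) (app a' b)
  | abs {a a' : Lam} : HStep a a' → HStep (Lam.abs a) (Lam.abs a')

inductive HeadNormalizing : Lam → Prop
  | hnf {t : Lam} : IsHNF t → HeadNormalizing t
  | step {t t' : Lam} : HStep t t' → HeadNormalizing t' → HeadNormalizing t

theorem IsHNF.of_abs {a : Lam} (h : IsHNF (Lam.abs a)) : IsHNF a := by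
  obtain ⟨⟨⟩⟩ | ⟨h⟩ := h
  exact h

theorem IsHNF.headVarApp_of_app {a b : Lam} (h : IsHNF (app a b)) : HeadVarApp a := by
  obtain ⟨_ | ⟨_, h⟩⟩ := h
  exact h

namespace HStep

theorem not_isHNF {t t' : Lam} (h : HStep t t') : ¬ IsHNF t := by
  induction h with
  | beta => exact fun hh => nomatch hh.headVarApp_of_app
  | app _ _ ih => exact fun hh => ih (.head hh.headVarApp_of_app)
  | abs _ ih => exact fun hh => ih hh.of_abs

theorem exists_of_not_isHNF {t : Lam} (h : ¬ IsHNF t) : ∃ t', HStep t t' := by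
  induction t with
  | var n => exact absurd (.head (.var n)) h
  | app a b iha _ =>
    cases a with
    | var n => exact absurd (.head (.app b (.var n))) h
    | abs a => exact ⟨_, beta a b⟩
    | app a₁ a₂ =>
      obtain ⟨a', ha⟩ := iha fun hh => h (.head (.app b (.app a₂ hh.headVarApp_of_app)))
      exact ⟨_, app b ha⟩
  | abs a ih =>
    obtain ⟨a', ha⟩ := ih fun hh => h (.abs hh)
    exact ⟨_, abs ha⟩

theorem deterministic {t u v : Lam} (hu : HStep t u) (hv : HStep t v) : u = v := by
  induction hu generalizing v with
  | beta => cases hv; rfl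
  | app b _ ih => cases hv with | app _ hv => rw [ih hv]
  | abs _ ih => cases hv with | abs hv => rw [ih hv]

protected theorem subst {t t' : Lam} (h : HStep t t') (k : ℕ) (u : Lam) :
    HStep (t.subst k u) (t'.subst k u) := by
  induction h generalizing k u with
  | beta a b =>
    rw [subst_subst a b u (Nat.zero_le k)]
    exact beta _ _
  | app b _ ih => exact app _ (ih k u)
  | abs _ ih => exact abs (ih (k + 1) (u.lift 0))

protected theorem lift {t t' : Lam} (h : HStep t t') (d : ℕ) :
    HStep (t.lift d) (t'.lift d) := by
  induction h generalizing d with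
  | beta a b =>
    rw [lift_subst_of_ge a b (Nat.zero_le d)]
    exact beta _ _
  | app b _ ih => exact app _ (ih d)
  | abs _ ih => exact abs (ih (d + 1))

theorem of_whStep {t u : Lam} (h : WHStep t u) : HStep t u := by
  induction h with
  | beta a b => exact beta a b
  | app b ha ih => cases ha <;> exact app b ih

theorem step {t u : Lam} (h : HStep t u) : Step t u := by
  induction h with
  | beta a b => exact .beta a b
  | app b _ ih => exact .appL b ih
  | abs _ ih => exact .abs ih

end HStep

namespace HeadNormalizing

theorem abs {a : Lam} (h : HeadNormalizing a) : HeadNormalizing (Lam.abs a) := by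
  induction h with
  | hnf h => exact hnf (.abs h)
  | step h _ ih => exact step (.abs h) ih

theorem of_hSteps {t u : Lam} (h : ReflTransGen HStep t u) (hu : HeadNormalizing u) :
    HeadNormalizing t := by
  induction h using ReflTransGen.head_induction_on with
  | refl => exact hu
  | head h _ ih => exact step h ih

theorem of_whSteps {t u : Lam} (h : ReflTransGen WHStep t u) (hu : HeadNormalizing u) :
    HeadNormalizing t :=
  of_hSteps (ReflTransGen.mono (fun _ _ => HStep.of_whStep) _ _ h) hu

/-- Since head reduction is deterministic, the head reduction of `t` is traced step by step
by that of `f t`. -/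
theorem of_map {f : Lam → Lam} (hf : ∀ {t t'}, HStep t t' → HStep (f t) (f t')) {t : Lam}
    (h : HeadNormalizing (f t)) : HeadNormalizing t := by
  generalize hs : f t = s at h
  induction h generalizing t with
  | hnf hs' =>
    by_contra hn
    obtain ⟨t', ht⟩ := HStep.exists_of_not_isHNF fun h => hn (hnf h)
    exact (hf ht).not_isHNF (hs ▸ hs')
  | step hss' _ ih =>
    by_cases ht : IsHNF t
    · exact hnf ht
    obtain ⟨t', htt'⟩ := HStep.exists_of_not_isHNF ht
    exact step htt' (ih ((hs ▸ hf htt').deterministic hss'))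

theorem solvable {t : Lam} (h : HeadNormalizing t) : Solvable t := by
  induction h with
  | hnf h => exact ⟨_, .refl, h⟩
  | step h _ ih =>
    obtain ⟨w, hs, hw⟩ := ih
    exact ⟨w, .head h.step hs, hw⟩

end HeadNormalizing

theorem St.exists_whSteps_headVarApp {a a' : Lam} (h : St a a') (hv : HeadVarApp a') :
    ∃ a₀, ReflTransGen WHStep a a₀ ∧ HeadVarApp a₀ := by
  induction h with
  | var hw => exact ⟨_, hw, hv⟩
  | app hw _ _ ih _ =>
    obtain _ | ⟨_, hv'⟩ := hv
    obtain ⟨c, hc, hhc⟩ := ih hv'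
    exact ⟨_, hw.trans (whSteps_app _ hc), .app _ hhc⟩
  | abs => cases hv

theorem St.headNormalizing_of_isHNF {t h : Lam} (hst : St t h) (hh : IsHNF h) :
    HeadNormalizing t := by
  induction hst with
  | var hw => exact .of_whSteps hw (.hnf (.head (.var _)))
  | app hw ha _ _ _ =>
    obtain ⟨a₀, hc, hhc⟩ := ha.exists_whSteps_headVarApp hh.headVarApp_of_app
    exact .of_whSteps (hw.trans (whSteps_app _ hc)) (.hnf (.head (.app _ hhc)))
  | abs hw _ ih => exact .of_whSteps hw (ih hh.of_abs).abs

theorem solvable_iff_headNormalizing {t : Lam} : Solvable t ↔ HeadNormalizing t :=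
  ⟨fun ⟨_, hs, hh⟩ => (st_of_steps hs).headNormalizing_of_isHNF hh,
    HeadNormalizing.solvable⟩

theorem Solvable.of_subst {t : Lam} {k : ℕ} {u : Lam} (h : Solvable (t.subst k u)) :
    Solvable t :=
  solvable_iff_headNormalizing.2 <|
    .of_map (fun h => h.subst k u) (solvable_iff_headNormalizing.1 h)

theorem Solvable.of_lift {t : Lam} {d : ℕ} (h : Solvable (t.lift d)) : Solvable t :=
  solvable_iff_headNormalizing.2 <|
    .of_map (fun h => h.lift d) (solvable_iff_headNormalizing.1 h)

theorem eq_Omega_of_step_Omega {t : Lam} (h : Step Omega t) : t = Omega := by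
  cases h with
  | beta => rfl
  | appL _ h | appR _ h =>
    cases h with | abs h => rcases h with _ | ⟨_, ⟨⟩⟩ | ⟨_, ⟨⟩⟩

namespace OmegaStep

protected theorem subst {t t' : Lam} (h : OmegaStep t t') (k : ℕ) (u : Lam) :
    OmegaStep (t.subst k u) (t'.subst k u) := by
  induction h generalizing k u with
  | unsolv ht => exact unsolv fun hs => ht hs.of_subst
  | appL b _ ih => exact appL _ (ih k u)
  | appR a _ ih => exact appR _ (ih k u)
  | abs _ ih => exact abs (ih (k + 1) (u.lift 0))

protected theorem lift {t t' : Lam} (h : OmegaStep t t') (d : ℕ) :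
    OmegaStep (t.lift d) (t'.lift d) := by
  induction h generalizing d with
  | unsolv ht => exact unsolv fun hs => ht hs.of_lift
  | appL b _ ih => exact appL _ (ih d)
  | appR a _ ih => exact appR _ (ih d)
  | abs _ ih => exact abs (ih (d + 1))

theorem omegaSteps_subst_right {u u' : Lam} (h : OmegaStep u u') (t : Lam) (k : ℕ) :
    OmegaSteps (t.subst k u) (t.subst k u') := by
  induction t generalizing k u u' with
  | var n =>
    simp only [Lam.subst]
    split_ifs
    exacts [.single h, .refl, .refl]
  | app a b iha ihb =>
    exact (ReflTransGen.lift (app · _) (fun _ _ => appL _) _ _ (iha h k)).trans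
      (ReflTransGen.lift (app _ ·) (fun _ _ => appR _) _ _ (ihb h k))
  | abs a ih => exact ReflTransGen.lift Lam.abs (fun _ _ => abs) _ _ (ih (h.lift 0) (k + 1))

theorem exists_of_abs {t e : Lam} (h : OmegaStep t (Lam.abs e)) :
    ∃ t₀, t = Lam.abs t₀ ∧ OmegaStep t₀ e := by
  cases h with
  | abs h => exact ⟨_, rfl, h⟩

theorem postpone_step {a b c : Lam} (hab : OmegaStep a b) (hbc : Step b c) :
    ∃ d, ReflGen Step a d ∧ OmegaSteps d c := by
  induction hab generalizing c with
  | unsolv ht =>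
    rw [eq_Omega_of_step_Omega hbc]
    exact ⟨_, .refl, .single (unsolv ht)⟩
  | @appL a₁ _ b₁ ha ih =>
    cases hbc with
    | beta e b₁ =>
      obtain ⟨a₀, rfl, ha₀⟩ := exists_of_abs ha
      exact ⟨_, .single (.beta a₀ b₁), .single (ha₀.subst 0 b₁)⟩
    | appL _ hs =>
      obtain ⟨d, hd, hdc⟩ := ih hs
      exact ⟨app d b₁, ReflGen.lift (app · b₁) (fun _ _ => .appL b₁) _ _ hd,
        ReflTransGen.lift (app · b₁) (fun _ _ => appL b₁) _ _ hdc⟩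
    | appR _ hs => exact ⟨_, .single (.appR a₁ hs), .single (appL _ ha)⟩
  | @appR a₁ b₁ _ hb ih =>
    cases hbc with
    | beta e => exact ⟨_, .single (.beta e b₁), omegaSteps_subst_right hb e 0⟩
    | appL _ hs => exact ⟨_, .single (.appL b₁ hs), .single (appR _ hb)⟩
    | appR _ hs =>
      obtain ⟨d, hd, hdc⟩ := ih hs
      exact ⟨app a₁ d, ReflGen.lift (app a₁ ·) (fun _ _ => .appR a₁) _ _ hd,
        ReflTransGen.lift (app a₁ ·) (fun _ _ => appR a₁) _ _ hdc⟩
  | abs _ ih =>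
    cases hbc with
    | abs hs =>
      obtain ⟨d, hd, hdc⟩ := ih hs
      exact ⟨Lam.abs d, ReflGen.lift Lam.abs (fun _ _ => .abs) _ _ hd,
        ReflTransGen.lift Lam.abs (fun _ _ => abs) _ _ hdc⟩

end OmegaStep

end Lam

open Lam in
/-- Ω-postponement: if `u ▷_{βΩ}* v` then there is `w` with
`u ▷* w` and `w ▷_Ω* v`. -/
theorem omega_postponement (u v : Lam) (h : BOSteps u v) :
    ∃ w, Steps u w ∧ OmegaSteps w v :=
  ReflTransGen.postpone (fun _ _ _ => OmegaStep.postpone_step) h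
end

section
/- Assume u ▷* v, let x_[i] be an occurrence of the free variable x in u and x_[j] an occurrence of x in v that is a residue of x_[i]. Then Arg(x_[i], u) ⊑ Arg(x_[j], v). -/
/-!
Mark the occurrence `x_[p]` of `u` with a fresh variable `y`: its residues are then the
occurrences of `y` in the reduct, and `p` is the only occurrence of `y` in the marked term. So it
suffices to trace every occurrence of `y` in a reduct back, one β-step at a time, to an
occurrence of `y` whose arguments are `⊑` the new ones. Away from the contracted redex
`(λ.a) b` an occurrence keeps its arguments up to the reduction of one of them. An occurrence
coming from `a` gets its arguments substituted; one coming from a copy of `b` gets them lifted,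
followed, when it heads the copy, by the arguments of the variable the copy replaced. Either
way the old arguments become, under a substitution and up to reduction, a prefix of the new
ones.
-/

theorem List.Forall₂.comp {α β γ : Type*} {R : α → β → Prop} {S : β → γ → Prop}
    {T : α → γ → Prop} (hT : ∀ a b c, R a b → S b c → T a c) :
    ∀ {l₁ l₂ l₃}, Forall₂ R l₁ l₂ → Forall₂ S l₂ l₃ → Forall₂ T l₁ l₃
  | _, _, _, .nil, .nil => .nil
  | _, _, _, .cons h₁ t₁, .cons h₂ t₂ => .cons (hT _ _ _ h₁ h₂) (comp hT t₁ t₂)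

namespace Lam

/-! ### Parallel substitution -/

def up (σ : ℕ → Lam) : ℕ → Lam
  | 0 => var 0
  | m + 1 => lift 0 (σ m)

theorem psubst_abs (σ : ℕ → Lam) (a : Lam) : psubst σ (abs a) = abs (psubst (up σ) a) := rfl

theorem lift_var (d n : ℕ) : lift d (var n) = if n < d then var n else var (n + 1) := rfl

theorem lift_lift_of_le (t : Lam) {d e : ℕ} (hed : e ≤ d) :
    lift e (lift d t) = lift (d + 1) (lift e t) := by
  induction t generalizing d e with
  | var n => simp only [lift_var]; split_ifs <;> simp only [lift_var] <;> split_ifs <;> grind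
  | app a b iha ihb => simp only [lift, iha hed, ihb hed]
  | abs a iha => simp only [lift, iha (Nat.succ_le_succ hed)]

theorem psubst_lift (t : Lam) (σ : ℕ → Lam) (d : ℕ) :
    psubst σ (lift d t) = psubst (fun n => if n < d then σ n else σ (n + 1)) t := by
  induction t generalizing σ d with
  | var n => rw [lift_var]; split_ifs <;> simp [psubst, *]
  | app a b iha ihb => simp only [lift, psubst, iha, ihb]
  | abs a iha =>
    simp only [lift, psubst_abs, iha]
    congr 2
    funext n
    cases n with
    | zero => rfl
    | succ m => simp only [up, Nat.add_lt_add_iff_right]; split_ifs <;> rfl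

theorem lift_psubst (t : Lam) (σ : ℕ → Lam) (d : ℕ) :
    lift d (psubst σ t) = psubst (fun n => lift d (σ n)) t := by
  induction t generalizing σ d with
  | var n => rfl
  | app a b iha ihb => simp only [psubst, lift, iha, ihb]
  | abs a iha =>
    simp only [psubst_abs, lift, iha]
    congr 2
    funext n
    cases n with
    | zero => simp [up, lift_var]
    | succ m => exact (lift_lift_of_le (σ m) (Nat.zero_le d)).symm

theorem psubst_psubst (t : Lam) (σ τ : ℕ → Lam) :
    psubst τ (psubst σ t) = psubst (fun n => psubst τ (σ n)) t := by
  induction t generalizing σ τ with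
  | var n => rfl
  | app a b iha ihb => simp only [psubst, iha, ihb]
  | abs a iha =>
    simp only [psubst_abs, iha]
    congr 2
    funext n
    cases n with
    | zero => rfl
    | succ m =>
      change psubst (up τ) (lift 0 (σ m)) = lift 0 (psubst τ (σ m))
      rw [psubst_lift, lift_psubst]
      simp [up]

theorem psubst_id (t : Lam) : psubst var t = t := by
  induction t with
  | var n => rfl
  | app a b iha ihb => simp only [psubst, iha, ihb]
  | abs a iha =>
    conv_rhs => rw [← iha]
    rw [psubst_abs]
    congr 2
    funext n
    cases n <;> simp [up, lift_var]

def substFn (k : ℕ) (b : Lam) (n : ℕ) : Lam :=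
  if n = k then b else if k < n then var (n - 1) else var n

theorem subst_eq_psubst (t : Lam) (k : ℕ) (b : Lam) : subst t k b = psubst (substFn k b) t := by
  induction t generalizing k b with
  | var n => rfl
  | app a c iha ihc => simp only [subst, psubst, iha, ihc]
  | abs a iha =>
    simp only [subst, psubst_abs, iha]
    congr 2
    funext n
    cases n with
    | zero => simp [substFn, up]
    | succ m =>
      simp only [substFn, up, Nat.add_right_cancel_iff, Nat.add_lt_add_iff_right]
      split_ifs <;> simp [lift_var]
      omega

theorem lift_iterate_eq_psubst (m d : ℕ) (t : Lam) :
    (lift d)^[m] t = psubst (fun n => if n < d then var n else var (n + m)) t := by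
  induction m with
  | zero => simpa using (psubst_id t).symm
  | succ m ih =>
    rw [Function.iterate_succ_apply', ih, lift_psubst]
    congr 1
    funext n
    by_cases hn : n < d
    · simp [hn, lift_var]
    · simp only [hn, lift_var, if_false]
      rw [if_neg (by omega), Nat.add_assoc]

theorem psubst_subst_zero (σ : ℕ → Lam) (a b : Lam) :
    psubst σ (subst a 0 b) = subst (psubst (up σ) a) 0 (psubst σ b) := by
  simp only [subst_eq_psubst, psubst_psubst]
  congr 1
  funext n
  cases n with
  | zero => simp [substFn, psubst, up]
  | succ m =>
    change psubst _ (var m) = psubst _ (lift 0 (σ m))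
    rw [psubst_lift]
    exact (psubst_id _).symm

theorem Step.psubst {t t' : Lam} (h : Step t t') (σ : ℕ → Lam) :
    Step (psubst σ t) (psubst σ t') := by
  induction h generalizing σ with
  | beta a b => rw [psubst_subst_zero]; exact Step.beta _ _
  | appL b _ ih => exact Step.appL _ (ih σ)
  | appR a _ ih => exact Step.appR _ (ih σ)
  | abs _ ih => exact Step.abs (ih _)

theorem Steps.psubst {t t' : Lam} (h : Steps t t') (σ : ℕ → Lam) :
    Steps (psubst σ t) (psubst σ t') :=
  Relation.ReflTransGen.lift _ (fun _ _ hs => hs.psubst σ) _ _ h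

attribute [simp] subtermAt replaceAt

/-! ### Positions and subterms -/

def IsSpineTop (q : Pos) : Prop := ∀ r : Pos, q ≠ r ++ [Dir.left]

theorem isSpineTop_iff {q : Pos} : IsSpineTop q ↔ q.getLast? ≠ some Dir.left := by
  simp [IsSpineTop, List.getLast?_eq_some_iff]

theorem isSpineTop_nil : IsSpineTop [] := by simp [isSpineTop_iff]

theorem IsSpineTop.cons {q : Pos} (h : IsSpineTop q) {d : Dir} (hd : q = [] → d ≠ Dir.left) :
    IsSpineTop (d :: q) := by
  rw [isSpineTop_iff] at h ⊢
  cases q <;> simp_all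

theorem IsSpineTop.of_cons {d : Dir} {q : Pos} (h : IsSpineTop (d :: q)) : IsSpineTop q :=
  fun r hr => h (d :: r) (by simp [hr])

theorem isSpineTop_append_singleton (q : Pos) {d : Dir} (hd : d ≠ Dir.left) :
    IsSpineTop (q ++ [d]) := by
  simpa [isSpineTop_iff] using hd

theorem IsSpineTop.append_replicate_inj {q q' : Pos} {m m' : ℕ} (hq : IsSpineTop q)
    (hq' : IsSpineTop q')
    (h : q ++ List.replicate m Dir.left = q' ++ List.replicate m' Dir.left) :
    q = q' ∧ m = m' := by
  induction m generalizing q' m' with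
  | zero =>
    cases m' with
    | zero => simpa using h
    | succ m' => exact absurd (by simpa [List.replicate_succ', ← List.append_assoc] using h) (hq _)
  | succ m ih =>
    cases m' with
    | zero =>
      exact absurd (by simpa [List.replicate_succ', ← List.append_assoc] using h.symm) (hq' _)
    | succ m' =>
      simp only [List.replicate_succ', ← List.append_assoc, List.append_cancel_right_eq] at h
      simpa using ih hq' h

theorem exists_isSpineTop_append_replicate (p : Pos) :
    ∃ q m, IsSpineTop q ∧ p = q ++ List.replicate m Dir.left := by
  induction p using List.reverseRecOn with
  | nil => exact ⟨[], 0, isSpineTop_nil, rfl⟩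
  | append_singleton p d ih =>
    cases d with
    | left =>
      obtain ⟨q, m, hq, rfl⟩ := ih
      exact ⟨q, m + 1, hq, by simp [List.replicate_succ']⟩
    | right => exact ⟨p ++ [Dir.right], 0, isSpineTop_append_singleton p (by simp), by simp⟩
    | down => exact ⟨p ++ [Dir.down], 0, isSpineTop_append_singleton p (by simp), by simp⟩

theorem cons_ne_replicate_left {d : Dir} (hd : d ≠ Dir.left) (s : Pos) (n : ℕ) :
    d :: s ≠ List.replicate n Dir.left :=
  fun h => hd (List.eq_of_mem_replicate (h ▸ List.mem_cons_self))

def OnLeftSpine (q : Pos) : Prop := ∀ d ∈ q, d = Dir.left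

theorem IsSpineTop.eq_nil_of_onLeftSpine {q : Pos} (hq : IsSpineTop q) (hl : OnLeftSpine q) :
    q = [] := by
  rcases List.eq_nil_or_concat q with rfl | ⟨r, d, rfl⟩
  · rfl
  · obtain rfl : d = Dir.left := hl d (by simp)
    exact absurd (List.concat_eq_append ..) (hq r)

theorem subtermAt_append (q r : Pos) (t : Lam) :
    subtermAt t (q ++ r) = (subtermAt t q).bind (subtermAt · r) := by
  induction q generalizing t with
  | nil => simp
  | cons d q ih => rcases d with _ | _ | _ <;> rcases t with _ | _ | _ <;> simp [ih]

theorem eq_nil_of_subtermAt_var {t : Lam} {p e : Pos} {n : ℕ} {w : Lam}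
    (hp : subtermAt t p = some (var n)) (he : subtermAt t (p ++ e) = some w) : e = [] := by
  rw [subtermAt_append, hp] at he
  cases e <;> simp_all

theorem mkApps_append (f : Lam) (V W : List Lam) : mkApps f (V ++ W) = mkApps (mkApps f V) W := by
  simp [mkApps]

theorem mkApps_append_singleton (f : Lam) (V : List Lam) (a : Lam) :
    mkApps f (V ++ [a]) = app (mkApps f V) a := by
  simp [mkApps]

theorem map_mkApps (F : Lam → Lam) (hF : ∀ a b, F (app a b) = app (F a) (F b))
    (f : Lam) (V : List Lam) : F (mkApps f V) = mkApps (F f) (V.map F) := by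
  induction V using List.reverseRecOn with
  | nil => rfl
  | append_singleton V a ih => simp [mkApps_append_singleton, hF, ih]

theorem mkApps_inj {f f' : Lam} {U U' : List Lam} (hlen : U.length = U'.length)
    (h : mkApps f U = mkApps f' U') : f = f' ∧ U = U' := by
  induction U using List.reverseRecOn generalizing U' with
  | nil => simp_all [List.eq_nil_of_length_eq_zero hlen.symm, mkApps]
  | append_singleton U a ih =>
    rcases List.eq_nil_or_concat U' with rfl | ⟨U', a', rfl⟩
    · simp at hlen
    · simp only [List.concat_eq_append, mkApps_append_singleton, app.injEq] at h
      obtain ⟨hf, hU⟩ := ih (by simpa using hlen) h.1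
      exact ⟨hf, by simp [hU, h.2]⟩

theorem subtermAt_mkApps_replicate (f : Lam) (V : List Lam) :
    subtermAt (mkApps f V) (List.replicate V.length Dir.left) = some f := by
  induction V using List.reverseRecOn with
  | nil => simp [mkApps]
  | append_singleton V a ih => simpa [mkApps_append_singleton, List.replicate_succ] using ih

theorem exists_mkApps_of_subtermAt_replicate {n : ℕ} {w f : Lam}
    (h : subtermAt w (List.replicate n Dir.left) = some f) :
    ∃ V : List Lam, V.length = n ∧ w = mkApps f V := by
  induction n generalizing w with
  | zero => exact ⟨[], rfl, by simpa [mkApps, eq_comm] using h⟩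
  | succ n ih =>
    rcases w with _ | ⟨a, b⟩ | _ <;> simp [List.replicate_succ] at h
    obtain ⟨V, rfl, rfl⟩ := ih h
    exact ⟨V ++ [b], by simp, (mkApps_append_singleton ..).symm⟩

/-! ### Argument lists -/

theorem argOf_of_subtermAt {t f : Lam} {r : Pos} {W : List Lam} (hr : IsSpineTop r)
    (h : subtermAt t r = some (mkApps f W)) : ArgOf t (r ++ List.replicate W.length Dir.left) W :=
  ⟨r, f, rfl, hr, h, by rw [subtermAt_append, h, Option.bind_some, subtermAt_mkApps_replicate]⟩

theorem exists_argOf {t w : Lam} {p : Pos} (hp : subtermAt t p = some w) : ∃ U, ArgOf t p U := by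
  obtain ⟨q, m, hq, rfl⟩ := exists_isSpineTop_append_replicate p
  rw [subtermAt_append] at hp
  cases hw : subtermAt t q with
  | none => simp [hw] at hp
  | some w' =>
    rw [hw, Option.bind_some] at hp
    obtain ⟨U, rfl, rfl⟩ := exists_mkApps_of_subtermAt_replicate hp
    exact ⟨U, argOf_of_subtermAt hq hw⟩

theorem ArgOf.unique {t : Lam} {p : Pos} {U U' : List Lam} (h : ArgOf t p U)
    (h' : ArgOf t p U') : U = U' := by
  obtain ⟨q, f, rfl, hq, hsub, -⟩ := h
  obtain ⟨q', f', hp, hq', hsub', -⟩ := h'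
  obtain ⟨rfl, hlen⟩ := IsSpineTop.append_replicate_inj hq hq' hp
  rw [hsub] at hsub'
  exact (mkApps_inj hlen (Option.some.inj hsub')).2

theorem ArgOf.eq_replicate {t : Lam} {s : Pos} {U : List Lam} (h : ArgOf t s U)
    (hs : OnLeftSpine s) : s = List.replicate U.length Dir.left := by
  obtain ⟨q, f, rfl, hq, -, -⟩ := h
  rw [IsSpineTop.eq_nil_of_onLeftSpine hq fun d hd => hs d (List.mem_append_left _ hd),
    List.nil_append]

theorem ArgOf.isPrefix_of_subtermAt {t f : Lam} {q : Pos} {U V : List Lam}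
    (hV : ArgOf t (q ++ List.replicate U.length Dir.left) V)
    (hq : subtermAt t q = some (mkApps f U)) : U <+: V := by
  obtain ⟨A, r, g, hqr, hr, hsub, hg⟩ := exists_argOf hq
  obtain rfl : g = mkApps f U := by simpa [hq] using hg.symm
  rw [← mkApps_append] at hsub
  have hUA := argOf_of_subtermAt hr hsub
  rw [List.length_append, Nat.add_comm, List.replicate_add, ← List.append_assoc, ← hqr] at hUA
  exact hV.unique hUA ▸ List.prefix_append U A

theorem argOf_cons_iff {t t' : Lam} {d : Dir} (hd : d ≠ Dir.left)
    (ht : ∀ p, subtermAt t (d :: p) = subtermAt t' p) {s : Pos} {U : List Lam} :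
    ArgOf t (d :: s) U ↔ ArgOf t' s U := by
  constructor
  · rintro ⟨_ | ⟨e, q⟩, f, hp, hq, hsub, hf⟩
    · exact (cons_ne_replicate_left hd _ _ hp).elim
    · obtain ⟨rfl, rfl⟩ : e = d ∧ s = q ++ _ := by simpa [eq_comm] using hp
      rw [ht] at hsub hf
      exact ⟨q, f, rfl, IsSpineTop.of_cons hq, hsub, hf⟩
  · rintro ⟨q, f, rfl, hq, hsub, hf⟩
    exact ⟨d :: q, f, rfl, IsSpineTop.cons hq fun _ => hd, (ht q).trans hsub, (ht _).trans hf⟩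

theorem argOf_app_right_iff {a b : Lam} {s : Pos} {U : List Lam} :
    ArgOf (app a b) (Dir.right :: s) U ↔ ArgOf b s U :=
  argOf_cons_iff (by simp) fun _ => rfl

theorem argOf_abs_iff {a : Lam} {s : Pos} {U : List Lam} :
    ArgOf (abs a) (Dir.down :: s) U ↔ ArgOf a s U :=
  argOf_cons_iff (by simp) fun _ => rfl

theorem ArgOf.app_left_of_ne {a b : Lam} {s : Pos} {U : List Lam} (h : ArgOf a s U)
    (hs : s ≠ List.replicate U.length Dir.left) : ArgOf (app a b) (Dir.left :: s) U := by
  obtain ⟨r, f, rfl, hr, hsub, hf⟩ := h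
  have hr0 : r ≠ [] := by rintro rfl; exact hs rfl
  exact ⟨Dir.left :: r, f, rfl, IsSpineTop.cons hr (absurd · hr0), hsub, hf⟩

theorem ArgOf.app_left_of_eq {a b : Lam} {s : Pos} {U : List Lam} (h : ArgOf a s U)
    (hs : s = List.replicate U.length Dir.left) : ArgOf (app a b) (Dir.left :: s) (U ++ [b]) := by
  obtain ⟨r, f, hp, -, hsub, -⟩ := h
  obtain rfl : r = [] := by simpa [hs] using hp
  obtain rfl : a = mkApps f U := by simpa using hsub
  simpa [hs, List.replicate_succ] using
    argOf_of_subtermAt (t := app (mkApps f U) b) isSpineTop_nil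
      (by simp [mkApps_append_singleton] : _ = some (mkApps f (U ++ [b])))

theorem argOf_app_left_iff {a b : Lam} {s : Pos} {U : List Lam} :
    ArgOf (app a b) (Dir.left :: s) U ↔
      ∃ U₀, ArgOf a s U₀ ∧ (s = List.replicate U₀.length Dir.left ∧ U = U₀ ++ [b] ∨
        s ≠ List.replicate U₀.length Dir.left ∧ U = U₀) := by
  constructor
  · intro h
    obtain ⟨_, f, -, -, -, hf⟩ := id h
    obtain ⟨U₀, hU₀⟩ := exists_argOf (show subtermAt a s = some f from hf)
    refine ⟨U₀, hU₀, ?_⟩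
    by_cases hs : s = List.replicate U₀.length Dir.left
    · exact Or.inl ⟨hs, h.unique (hU₀.app_left_of_eq hs)⟩
    · exact Or.inr ⟨hs, h.unique (hU₀.app_left_of_ne hs)⟩
  · rintro ⟨U₀, hU₀, ⟨hs, rfl⟩ | ⟨hs, rfl⟩⟩
    · exact hU₀.app_left_of_eq hs
    · exact hU₀.app_left_of_ne hs

/-! ### Subterms of lifted, substituted and renamed terms -/

theorem subtermAt_lift (p : Pos) (t : Lam) (d : ℕ) :
    subtermAt (lift d t) p = (subtermAt t p).map (lift (d + p.count Dir.down)) := by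
  induction p generalizing t d with
  | nil => simp
  | cons e p ih =>
    rcases e with _ | _ | _ <;> rcases t with n | _ | _ <;>
      simp [lift, ih, Nat.add_assoc, Nat.add_comm 1] <;> split_ifs <;> simp

theorem subtermAt_lift_iterate (m : ℕ) (b : Lam) (s : Pos) :
    subtermAt ((lift 0)^[m] b) s = (subtermAt b s).map (lift (s.count Dir.down))^[m] := by
  induction m with
  | zero => simp
  | succ m ih =>
    rw [Function.iterate_succ_apply', subtermAt_lift, ih, Option.map_map, Nat.zero_add,
      ← Function.iterate_succ']

theorem lift_iterate_var (m d c : ℕ) :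
    (lift d)^[m] (var c) = if c < d then var c else var (c + m) := by
  rw [lift_iterate_eq_psubst]
  rfl

theorem exists_var_of_lift_iterate_eq_var {m d c : ℕ} {b : Lam} (h : (lift d)^[m] b = var c) :
    ∃ c₀, b = var c₀ := by
  rw [lift_iterate_eq_psubst] at h
  cases b with
  | var n => exact ⟨n, rfl⟩
  | app => cases h
  | abs => cases h

theorem lift_iterate_mkApps (m d : ℕ) (f : Lam) (V : List Lam) :
    (lift d)^[m] (mkApps f V) = mkApps ((lift d)^[m] f) (V.map (lift d)^[m]) :=
  map_mkApps _ (fun a b => by simp [lift_iterate_eq_psubst, psubst]) f V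

theorem subst_mkApps (f : Lam) (V : List Lam) (k : ℕ) (b : Lam) :
    subst (mkApps f V) k b = mkApps (subst f k b) (V.map (subst · k b)) :=
  map_mkApps (subst · k b) (fun _ _ => rfl) f V

theorem subtermAt_subst {p : Pos} {t w : Lam} (hw : subtermAt t p = some w) (k : ℕ) (b : Lam) :
    subtermAt (subst t k b) p =
      some (subst w (k + p.count Dir.down) ((lift 0)^[p.count Dir.down] b)) := by
  induction p generalizing t k b with
  | nil => simp_all
  | cons e p ih =>
    rcases e with _ | _ | _ <;> rcases t with _ | _ | a <;> simp at hw <;>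
      simp [subst, ih hw, Nat.add_assoc, Nat.add_comm 1, Function.iterate_succ_apply]

theorem subtermAt_subst_cases {p : Pos} {t w : Lam} {k : ℕ} {b : Lam}
    (hw : subtermAt (subst t k b) p = some w) :
    (∃ w₀, subtermAt t p = some w₀ ∧
        w = subst w₀ (k + p.count Dir.down) ((lift 0)^[p.count Dir.down] b)) ∨
    (∃ z s, p = z ++ s ∧ subtermAt t z = some (var (k + z.count Dir.down)) ∧
        subtermAt ((lift 0)^[z.count Dir.down] b) s = some w) := by
  induction p generalizing t k b with
  | nil => simp_all
  | cons e p ih =>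
    rcases t with n | ⟨a, c⟩ | a
    · by_cases hn : n = k
      · subst hn
        exact Or.inr ⟨[], e :: p, rfl, by simp, by simpa [subst] using hw⟩
      · simp only [subst, if_neg hn] at hw
        split_ifs at hw <;> simp at hw
    · rcases e with _ | _ | _ <;> simp only [subst, subtermAt] at hw
      · rcases ih hw with ⟨w₀, h₁, h₂⟩ | ⟨z, s, rfl, h₁, h₂⟩
        · exact Or.inl ⟨w₀, by simpa using h₁, by simpa using h₂⟩
        · exact Or.inr ⟨Dir.left :: z, s, rfl, by simpa using h₁, by simpa using h₂⟩
      · rcases ih hw with ⟨w₀, h₁, h₂⟩ | ⟨z, s, rfl, h₁, h₂⟩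
        · exact Or.inl ⟨w₀, by simpa using h₁, by simpa using h₂⟩
        · exact Or.inr ⟨Dir.right :: z, s, rfl, by simpa using h₁, by simpa using h₂⟩
      · simp at hw
    · rcases e with _ | _ | _ <;> simp only [subst, subtermAt] at hw
      · simp at hw
      · simp at hw
      · rcases ih hw with ⟨w₀, h₁, h₂⟩ | ⟨z, s, rfl, h₁, h₂⟩
        · refine Or.inl ⟨w₀, by simpa using h₁, ?_⟩
          simpa [Nat.add_assoc, Nat.add_comm 1, Function.iterate_succ_apply] using h₂
        · refine Or.inr ⟨Dir.down :: z, s, rfl, ?_, ?_⟩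
          · simpa [Nat.add_assoc, Nat.add_comm 1] using h₁
          · simpa [Function.iterate_succ_apply] using h₂

def renameFn (y x n : ℕ) : Lam := if n = y then var x else var n

theorem rename_eq_psubst (t : Lam) (y x : ℕ) : rename y x t = psubst (renameFn y x) t := by
  induction t generalizing y x with
  | var n => rfl
  | app a b iha ihb => simp only [rename, psubst, iha, ihb]
  | abs a iha =>
    simp only [rename, psubst_abs, iha]
    congr 2
    funext n
    cases n with
    | zero => rfl
    | succ m => by_cases hm : m = y <;> simp [renameFn, up, hm, lift_var]

theorem subtermAt_rename (p : Pos) (t : Lam) (y x : ℕ) :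
    subtermAt (rename y x t) p =
      (subtermAt t p).map (rename (y + p.count Dir.down) (x + p.count Dir.down)) := by
  induction p generalizing t y x with
  | nil => simp
  | cons e p ih =>
    rcases e with _ | _ | _ <;> rcases t with n | _ | _ <;>
      simp [rename, ih, Nat.add_assoc, Nat.add_comm 1] <;> split_ifs <;> simp

theorem exists_of_rename_eq_mkApps {y x : ℕ} {f : Lam} (V : List Lam) {w : Lam}
    (h : rename y x w = mkApps f V) :
    ∃ f₀ V₀, w = mkApps f₀ V₀ ∧ V = V₀.map (rename y x) := by
  induction V using List.reverseRecOn generalizing w with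
  | nil => exact ⟨w, [], rfl, rfl⟩
  | append_singleton V a ih =>
    rw [mkApps_append_singleton] at h
    rcases w with n | ⟨w₁, w₂⟩ | _
    · simp only [rename] at h; split_ifs at h
    · obtain ⟨h₁, rfl⟩ := app.inj h
      obtain ⟨f₀, V₀, rfl, rfl⟩ := ih h₁
      exact ⟨f₀, V₀ ++ [w₂], (mkApps_append_singleton ..).symm, by simp⟩
    · cases h

/-! ### Marking an occurrence -/

theorem subtermAt_replaceAt_self {p : Pos} {t t' s : Lam} (h : replaceAt t p s = some t') :
    subtermAt t' p = some s := by
  induction p generalizing t t' with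
  | nil => simp_all
  | cons e p ih =>
    rcases e with _ | _ | _ <;> rcases t with _ | _ | _ <;> simp at h <;>
      obtain ⟨_, h, rfl⟩ := h <;> simpa using ih h

theorem subtermAt_replaceAt_append {q r : Pos} {t t' s w : Lam}
    (h : replaceAt t (q ++ r) s = some t') (hw : subtermAt t q = some w) :
    ∃ w', replaceAt w r s = some w' ∧ subtermAt t' q = some w' := by
  induction q generalizing t t' with
  | nil => simp_all
  | cons e q ih =>
    rcases e with _ | _ | _ <;> rcases t with _ | _ | _ <;> simp at h hw <;>
      obtain ⟨_, h, rfl⟩ := h <;> simpa using ih h hw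

theorem subtermAt_replaceAt_of_not_prefix {p q : Pos} {t t' s : Lam}
    (h : replaceAt t p s = some t') (hpq : ¬ p <+: q) (hqp : ¬ q <+: p) :
    subtermAt t' q = subtermAt t q := by
  induction q generalizing p t t' with
  | nil => exact absurd List.nil_prefix hqp
  | cons e q ih =>
    rcases p with _ | ⟨f, p⟩
    · exact absurd List.nil_prefix hpq
    rcases f with _ | _ | _ <;> rcases t with _ | _ | _ <;> simp at h <;>
      obtain ⟨_, h, rfl⟩ := h <;> rcases e with _ | _ | _ <;> simp <;>
      exact ih h (by simpa using hpq) (by simpa using hqp)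

theorem replaceAt_mkApps_replicate (f s : Lam) (V : List Lam) :
    replaceAt (mkApps f V) (List.replicate V.length Dir.left) s = some (mkApps s V) := by
  induction V using List.reverseRecOn with
  | nil => simp [mkApps]
  | append_singleton V a ih => simp [mkApps_append_singleton, List.replicate_succ, ih]

theorem ArgOf.replaceAt {u u₀ s : Lam} {p : Pos} {U : List Lam} (hU : ArgOf u p U)
    (h : replaceAt u p s = some u₀) : ArgOf u₀ p U := by
  obtain ⟨r, f, rfl, hr, hsub, -⟩ := hU
  obtain ⟨w', hw', hsub₀⟩ := subtermAt_replaceAt_append h hsub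
  rw [replaceAt_mkApps_replicate, Option.some.injEq] at hw'
  exact argOf_of_subtermAt hr (hw' ▸ hsub₀)

theorem OccOf.free {y : ℕ} {t : Lam} {q : Pos} (h : OccOf y t q) : Free y t := by
  induction q generalizing y t with
  | nil => simp_all [OccOf, Free]
  | cons e q ih =>
    rcases e with _ | _ | _ <;> rcases t with _ | _ | _ <;> simp [OccOf] at h
    · exact Or.inl (ih (by simpa [OccOf] using h))
    · exact Or.inr (ih (by simpa [OccOf] using h))
    · exact ih (y := y + 1) (by simpa [OccOf, Nat.add_assoc, Nat.add_comm 1] using h)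

theorem OccOf.eq_of_replaceAt {y : ℕ} {u u₀ : Lam} {p q : Pos} (hy : ¬ Free y u)
    (h : replaceAt u p (var (y + p.count Dir.down)) = some u₀) (hq : OccOf y u₀ q) : q = p := by
  have hp := subtermAt_replaceAt_self h
  by_cases hpq : p <+: q
  · obtain ⟨e, rfl⟩ := hpq
    simp [eq_nil_of_subtermAt_var hp hq]
  by_cases hqp : q <+: p
  · obtain ⟨e, rfl⟩ := hqp
    simp [eq_nil_of_subtermAt_var hq hp]
  have hqu : OccOf y u q := by rw [OccOf, ← subtermAt_replaceAt_of_not_prefix h hpq hqp]; exact hq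
  exact absurd hqu.free hy

/-! ### The preorder `⊑` -/

theorem sqsubseteq_of_forall₂ {U V : List Lam} (h : List.Forall₂ Steps U V) : Sqsubseteq U V :=
  ⟨var, V, List.prefix_refl V, h.imp fun u w => by simp [psubst_id]⟩

theorem Sqsubseteq.refl (U : List Lam) : Sqsubseteq U U :=
  sqsubseteq_of_forall₂ (List.forall₂_same.2 fun _ _ => .refl)

theorem nil_sqsubseteq (V : List Lam) : Sqsubseteq [] V := ⟨var, [], List.nil_prefix, .nil⟩

theorem sqsubseteq_map {F : Lam → Lam} {σ : ℕ → Lam} (hF : ∀ t, F t = psubst σ t)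
    (U : List Lam) : Sqsubseteq U (U.map F) :=
  ⟨σ, _, List.prefix_refl _,
    List.forall₂_map_right_iff.2 (List.forall₂_same.2 fun t _ => hF t ▸ .refl)⟩

theorem Sqsubseteq.trans_prefix {U V W : List Lam} (h : Sqsubseteq U V) (hVW : V <+: W) :
    Sqsubseteq U W :=
  let ⟨σ, V', hV', hU⟩ := h
  ⟨σ, V', hV'.trans hVW, hU⟩

theorem Sqsubseteq.trans {U V W : List Lam} (h₁ : Sqsubseteq U V) (h₂ : Sqsubseteq V W) :
    Sqsubseteq U W := by
  obtain ⟨σ₁, V', ⟨V'', rfl⟩, hU⟩ := h₁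
  obtain ⟨σ₂, W', hW', hV⟩ := h₂
  refine ⟨fun n => psubst σ₂ (σ₁ n), W'.take V'.length, (W'.take_prefix _).trans hW', ?_⟩
  have hV' := List.forall₂_take V'.length hV
  rw [List.take_left] at hV'
  refine hU.comp (fun u v w huv hvw => ?_) hV'
  rw [← psubst_psubst]
  exact (huv.psubst σ₂).trans hvw

/-! ### Tracing an occurrence back along β-reduction -/

theorem ArgOf.exists_sqsubseteq_of_rename {y x : ℕ} {v₀ : Lam} {p : Pos} {V : List Lam}
    (h : ArgOf (rename y x v₀) p V) : ∃ V₀, ArgOf v₀ p V₀ ∧ Sqsubseteq V₀ V := by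
  obtain ⟨r, f, rfl, hr, hsub, -⟩ := h
  rw [subtermAt_rename, Option.map_eq_some_iff] at hsub
  obtain ⟨w, hw, hwf⟩ := hsub
  obtain ⟨f₀, V₀, rfl, rfl⟩ := exists_of_rename_eq_mkApps V hwf
  refine ⟨V₀, by simpa using argOf_of_subtermAt hr hw, ?_⟩
  exact sqsubseteq_map (rename_eq_psubst · _ _) V₀

/-- Here `s` and `V` are an occurrence of `y` and its arguments in a reduct of `t`. The last
clause (a head occurrence of `t` is traced only by a head occurrence of the reduct) lets the
induction pass through the function part of an application, where the arguments of a head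
grow. -/
def TracedBack (y : ℕ) (t : Lam) (s : Pos) (V : List Lam) : Prop :=
  ∃ s₀ U, OccOf y t s₀ ∧ ArgOf t s₀ U ∧ Sqsubseteq U V ∧
    (OnLeftSpine s₀ → OnLeftSpine s ∧ List.Forall₂ Steps U V)

section TracedBack

variable {y : ℕ} {s : Pos} {V : List Lam}

theorem occOf_app_left {a b : Lam} : OccOf y (app a b) (Dir.left :: s) ↔ OccOf y a s := by
  simp [OccOf]

theorem occOf_app_right {a b : Lam} : OccOf y (app a b) (Dir.right :: s) ↔ OccOf y b s := by
  simp [OccOf]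

theorem occOf_abs {a : Lam} : OccOf y (abs a) (Dir.down :: s) ↔ OccOf (y + 1) a s := by
  simp [OccOf, Nat.add_assoc, Nat.add_comm 1]

theorem tracedBack_self {t : Lam} (hocc : OccOf y t s) (hV : ArgOf t s V) : TracedBack y t s V :=
  ⟨s, V, hocc, hV, .refl V, fun hs => ⟨hs, List.forall₂_same.2 fun _ _ => .refl⟩⟩

theorem TracedBack.app_right {b : Lam} (h : TracedBack y b s V) (a : Lam) :
    TracedBack y (app a b) (Dir.right :: s) V := by
  obtain ⟨s₀, U, hocc, hU, hUV, -⟩ := h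
  exact ⟨Dir.right :: s₀, U, occOf_app_right.2 hocc, argOf_app_right_iff.2 hU, hUV,
    fun hs => absurd (hs _ List.mem_cons_self) (by simp)⟩

theorem TracedBack.abs {a : Lam} (h : TracedBack (y + 1) a s V) :
    TracedBack y (abs a) (Dir.down :: s) V := by
  obtain ⟨s₀, U, hocc, hU, hUV, -⟩ := h
  exact ⟨Dir.down :: s₀, U, occOf_abs.2 hocc, argOf_abs_iff.2 hU, hUV,
    fun hs => absurd (hs _ List.mem_cons_self) (by simp)⟩

theorem TracedBack.app_left {a a' b : Lam} {V₀ : List Lam} (h : TracedBack y a s V₀)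
    (hV₀ : ArgOf a' s V₀) (hV : ArgOf (app a' b) (Dir.left :: s) V) :
    TracedBack y (app a b) (Dir.left :: s) V := by
  obtain ⟨s₀, U, hocc, hU, hUV₀, hhead⟩ := h
  obtain ⟨V₀', hV₀', hV₀V⟩ := argOf_app_left_iff.1 hV
  obtain rfl := hV₀.unique hV₀'
  have hocc' : OccOf y (app a b) (Dir.left :: s₀) := occOf_app_left.2 hocc
  by_cases hs₀ : s₀ = List.replicate U.length Dir.left
  · obtain ⟨hs, hUV₀'⟩ := hhead (hs₀ ▸ fun _ => List.eq_of_mem_replicate)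
    obtain rfl : V = V₀ ++ [b] := by simpa [hV₀.eq_replicate hs] using hV₀V
    have hUV : List.Forall₂ Steps (U ++ [b]) (V₀ ++ [b]) :=
      List.rel_append hUV₀' (.cons .refl .nil)
    refine ⟨_, _, hocc', hU.app_left_of_eq hs₀, sqsubseteq_of_forall₂ hUV, fun _ => ⟨?_, hUV⟩⟩
    simpa [OnLeftSpine] using hs
  · refine ⟨_, _, hocc', hU.app_left_of_ne hs₀, hUV₀.trans_prefix ?_, fun hs => ?_⟩
    · rcases hV₀V with ⟨-, rfl⟩ | ⟨-, rfl⟩ <;> simp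
    · exact absurd (hU.eq_replicate fun d hd => hs d (List.mem_cons_of_mem _ hd)) hs₀

theorem tracedBack_app_left_of_step_right {a b b' : Lam} (hb : Step b b')
    (hocc : OccOf y a s) (hV : ArgOf (app a b') (Dir.left :: s) V) :
    TracedBack y (app a b) (Dir.left :: s) V := by
  have hocc' : OccOf y (app a b) (Dir.left :: s) := occOf_app_left.2 hocc
  obtain ⟨V₀, hV₀, ⟨hs, rfl⟩ | ⟨hs, rfl⟩⟩ := argOf_app_left_iff.1 hV
  · have hUV : List.Forall₂ Steps (V₀ ++ [b]) (V₀ ++ [b']) :=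
      List.rel_append (List.forall₂_same.2 fun _ _ => .refl) (.cons (.single hb) .nil)
    exact ⟨_, _, hocc', hV₀.app_left_of_eq hs, sqsubseteq_of_forall₂ hUV, fun hs => ⟨hs, hUV⟩⟩
  · exact tracedBack_self hocc' (hV₀.app_left_of_ne hs)

theorem tracedBack_beta_of_var (a : Lam) : TracedBack y (app (abs a) (var y)) s V := by
  have hy : ArgOf (var y) [] [] := by
    simpa using argOf_of_subtermAt (t := var y) (f := var y) (W := []) isSpineTop_nil rfl
  exact ⟨[Dir.right], [], by simp [OccOf], argOf_app_right_iff.2 hy, nil_sqsubseteq V,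
    fun hs => absurd (hs _ List.mem_cons_self) (by simp)⟩

theorem tracedBack_beta_of_body {a b : Lam} (hocc : OccOf (y + 1) a s)
    (hV : ArgOf (subst a 0 b) s V) : TracedBack y (app (abs a) b) s V := by
  obtain ⟨U, hU⟩ := exists_argOf hocc
  obtain ⟨r, f, hsr, -, hsub, -⟩ := id hU
  have hsub' := subtermAt_subst hsub 0 b
  rw [subst_mkApps] at hsub'
  have hUV := ArgOf.isPrefix_of_subtermAt (by rwa [List.length_map, ← hsr]) hsub'
  exact ⟨Dir.left :: Dir.down :: s, U, occOf_app_left.2 (occOf_abs.2 hocc),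
    (argOf_abs_iff.2 hU).app_left_of_ne (cons_ne_replicate_left (by simp) _ _),
    (sqsubseteq_map (subst_eq_psubst · _ _) U).trans_prefix hUV,
    fun hs => absurd (hs Dir.down (by simp)) (by simp)⟩

theorem tracedBack_beta_of_arg {a b : Lam} {z sb : Pos}
    (hz : subtermAt a z = some (var (z.count Dir.down))) (hocc : OccOf y b sb)
    (hV : ArgOf (subst a 0 b) (z ++ sb) V) : TracedBack y (app (abs a) b) (z ++ sb) V := by
  obtain ⟨U, hU⟩ := exists_argOf hocc
  refine ⟨Dir.right :: sb, U, occOf_app_right.2 hocc, argOf_app_right_iff.2 hU, ?_,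
    fun hs => absurd (hs _ List.mem_cons_self) (by simp)⟩
  obtain ⟨r, f, rfl, -, hsub, -⟩ := hU
  have hcopy : subtermAt (subst a 0 b) z = some ((lift 0)^[z.count Dir.down] b) := by
    simpa [subst] using subtermAt_subst hz 0 b
  have hsub' : subtermAt (subst a 0 b) (z ++ r) = some (mkApps
      ((lift (r.count Dir.down))^[z.count Dir.down] f)
      (U.map (lift (r.count Dir.down))^[z.count Dir.down])) := by
    rw [subtermAt_append, hcopy, Option.bind_some, subtermAt_lift_iterate, hsub, Option.map_some,
      lift_iterate_mkApps]
  have hUV := ArgOf.isPrefix_of_subtermAt (by rwa [List.length_map, List.append_assoc]) hsub'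
  exact (sqsubseteq_map (lift_iterate_eq_psubst _ _) U).trans_prefix hUV

theorem tracedBack_beta {a b : Lam} (hocc : OccOf y (subst a 0 b) s)
    (hV : ArgOf (subst a 0 b) s V) : TracedBack y (app (abs a) b) s V := by
  rcases subtermAt_subst_cases hocc with ⟨w₀, hw₀, hw⟩ | ⟨z, sb, rfl, hz, hsb⟩
  · rcases w₀ with m | _ | _
    · simp only [subst] at hw
      split_ifs at hw with hm hm'
      · obtain ⟨c, rfl⟩ := exists_var_of_lift_iterate_eq_var hw.symm
        rw [lift_iterate_var] at hw
        obtain rfl : c = y := by simp at hw; omega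
        exact tracedBack_beta_of_var a
      · obtain rfl : m = y + 1 + s.count Dir.down := by simp at hw; omega
        exact tracedBack_beta_of_body hw₀ hV
      · simp at hw; omega
    · simp [subst] at hw
    · simp [subst] at hw
  · rw [subtermAt_lift_iterate, Option.map_eq_some_iff] at hsb
    obtain ⟨w, hw, hw'⟩ := hsb
    obtain ⟨c, rfl⟩ := exists_var_of_lift_iterate_eq_var hw'
    rw [lift_iterate_var] at hw'
    obtain rfl : c = y + sb.count Dir.down := by split_ifs at hw' <;> simp at hw' <;> omega
    exact tracedBack_beta_of_arg (by simpa using hz) hw hV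

theorem Step.tracedBack {t t' : Lam} (h : Step t t') (hocc : OccOf y t' s)
    (hV : ArgOf t' s V) : TracedBack y t s V := by
  induction h generalizing y s V with
  | beta a b => exact tracedBack_beta hocc hV
  | @appL a a' b _ ih =>
    rcases s with _ | ⟨_ | _ | _, s⟩
    · simp [OccOf] at hocc
    · obtain ⟨V₀, hV₀, -⟩ := argOf_app_left_iff.1 hV
      exact (ih (occOf_app_left.1 hocc) hV₀).app_left hV₀ hV
    · exact (tracedBack_self (occOf_app_right.1 hocc) (argOf_app_right_iff.1 hV)).app_right a
    · simp [OccOf] at hocc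
  | appR a hb ih =>
    rcases s with _ | ⟨_ | _ | _, s⟩
    · simp [OccOf] at hocc
    · exact tracedBack_app_left_of_step_right hb (occOf_app_left.1 hocc) hV
    · exact (ih (occOf_app_right.1 hocc) (argOf_app_right_iff.1 hV)).app_right a
    · simp [OccOf] at hocc
  | abs _ ih =>
    rcases s with _ | ⟨_ | _ | _, s⟩
    · simp [OccOf] at hocc
    · simp [OccOf] at hocc
    · simp [OccOf] at hocc
    · exact (ih (occOf_abs.1 hocc) (argOf_abs_iff.1 hV)).abs

theorem Steps.exists_argOf_sqsubseteq {t w : Lam} (h : Steps t w) (hocc : OccOf y w s)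
    (hV : ArgOf w s V) : ∃ q U, OccOf y t q ∧ ArgOf t q U ∧ Sqsubseteq U V := by
  induction h using Relation.ReflTransGen.head_induction_on with
  | refl => exact ⟨s, V, hocc, hV, .refl V⟩
  | head hstep _ ih =>
    obtain ⟨q, U, hq, hU, hUV⟩ := ih
    obtain ⟨q₀, U₀, hq₀, hU₀, hU₀U, -⟩ := hstep.tracedBack hq hU
    exact ⟨q₀, U₀, hq₀, hU₀, hU₀U.trans hUV⟩

end TracedBack

end Lam

open Lam in
theorem arg_of_residue_general (x : ℕ) (u v : Lam) (p p' : Pos) (U V : List Lam)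
    (hres : Residue x u v p p')
    (hU : ArgOf u p U) (hV : ArgOf v p' V) :
    Sqsubseteq U V := by
  obtain ⟨y, u₀, v₀, hy, hmark, hsteps, rfl, hocc⟩ := hres
  obtain ⟨V₀, hV₀, hV₀V⟩ := hV.exists_sqsubseteq_of_rename
  obtain ⟨q, U₀, hq, hU₀, hU₀V₀⟩ := hsteps.exists_argOf_sqsubseteq hocc hV₀
  obtain rfl := OccOf.eq_of_replaceAt hy hmark hq
  obtain rfl := hU₀.unique (hU.replaceAt hmark)
  exact hU₀V₀.trans hV₀V

open Lam in
/-- if `u ▷* v` and the occurrence `p'` of `x` in `v` is a residue of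
the occurrence `p` of `x` in `u`, then `Arg(x_[p], u) ⊑ Arg(x_[p'], v)`. -/
theorem arg_of_residue (x : ℕ) (u v : Lam) (p p' : Pos) (U V : List Lam)
    (hred : Steps u v) (hocc : OccOf x u p) (hocc' : OccOf x v p')
    (hres : Residue x u v p p')
    (hU : ArgOf u p U) (hV : ArgOf v p' V) :
    Sqsubseteq U V :=
  arg_of_residue_general x u v p p' U V hres hU hV
end
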